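/- arXiv:2405.15001 — 7 statements merged into one kernel-verified Lean document; each statement's English description precedes it below -/
import Mathlib

section
/- For all integers m ≤ l ≤ n and d ≥ 1, the equation 2^{n-2} = 2^{m-2}·10^d + 2^{l-2} with n > m ≥ 2, l ≥ 2 has no solutions in positive integers. -/
theorem stmt_2 (m l n d : ℕ) (hml : m ≤ l) (hln : l ≤ n) (hm : 2 ≤ m) (hl : 2 ≤ l)
    (hnm : m < n) (hd : 1 ≤ d) :
    2 ^ (n - 2) ≠ 2 ^ (m - 2) * 10 ^ d + 2 ^ (l - 2) := by
  intro h
  set a := m - 2 with ha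
  set b := l - 2 with hb
  set c := n - 2 with hc
  have hab : a ≤ b := Nat.sub_le_sub_right hml 2
  have hbc : b ≤ c := Nat.sub_le_sub_right hln 2
  have hpos : 0 < 2 ^ a * 10 ^ d := by positivity
  have hbc' : b < c := by
    rcases lt_or_eq_of_le hbc with h' | h'
    · exact h'
    · rw [h'] at h; omega
  have h10 : (10 : ℕ) ^ d = 2 ^ d * 5 ^ d := by
    rw [show (10:ℕ) = 2 * 5 by norm_num, mul_pow]
  have key : 2 ^ b * (2 ^ (c - b) - 1) = 2 ^ (a + d) * 5 ^ d := by
    have h1 : 2 ^ b * 2 ^ (c - b) = 2 ^ c := by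
      rw [← pow_add]; congr 1; omega
    have h2 : 2 ^ b * (2 ^ (c - b) - 1) = 2 ^ c - 2 ^ b := by
      rw [Nat.mul_sub, h1, mul_one]
    have h3 : 2 ^ (a + d) * 5 ^ d = 2 ^ a * 10 ^ d := by
      rw [h10, pow_add]; ring
    have hle : 2 ^ b ≤ 2 ^ c := Nat.pow_le_pow_right (by norm_num) hbc
    omega
  have hxodd : (2 ^ (c - b) - 1) % 2 = 1 := by
    have h2 : (2:ℕ) ≤ 2 ^ (c - b) := by
      have : (2:ℕ)^1 ≤ 2 ^ (c-b) := Nat.pow_le_pow_right (by norm_num) (by omega)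
      simpa using this
    have : 2 ∣ 2 ^ (c - b) := dvd_pow_self 2 (by omega)
    omega
  have h5odd : (5:ℕ) ^ d % 2 = 1 := by
    rw [Nat.pow_mod]; norm_num
  have hval : b = a + d := by
    have := congrArg (padicValNat 2) key
    rw [padicValNat.mul (by positivity) (by omega),
        padicValNat.mul (by positivity) (by positivity),
        padicValNat.prime_pow, padicValNat.prime_pow,
        padicValNat.eq_zero_of_not_dvd (by omega),
        padicValNat.eq_zero_of_not_dvd (by omega)] at this
    omega
  have h5eq : 2 ^ (c - b) - 1 = 5 ^ d := by
    have key' : 2 ^ b * (2 ^ (c - b) - 1) = 2 ^ b * 5 ^ d := by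
      rw [key, hval]
    exact Nat.eq_of_mul_eq_mul_left (by positivity) key'
  have h5mod : 5 ^ d % 4 = 1 := by
    rw [Nat.pow_mod]; norm_num
  have hcb1 : c - b = 1 := by
    by_contra hne
    have h2 : (2:ℕ)^2 ∣ 2 ^ (c - b) := pow_dvd_pow 2 (by omega)
    have h2' : 2 ^ (c - b) % 4 = 0 := by omega
    omega
  rw [hcb1] at h5eq
  have : 5 ^ d ≥ 5 ^ 1 := Nat.pow_le_pow_right (by norm_num) hd
  omega
end

section
/- Let k ≥ 2 and let α be the dominant real root of the characteristic polynomial of the k-generalized Fibonacci sequence. Then for all n ≥ 1, α^{n-2} ≤ F_n^{(k)} ≤ α^{n-1}. -/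
def genFib (k : ℕ) : ℕ → ℕ
  | 0 => 0
  | 1 => 1
  | n + 2 => ∑ j ∈ Finset.range k, genFib k (n + 1 - j)

lemma genFib_rec (k m : ℕ) :
    genFib k (m + 2) = ∑ j ∈ Finset.range k, genFib k (m + 1 - j) := by
  rw [genFib]

lemma two_pow_sum (m : ℕ) : 1 + ∑ i ∈ Finset.range m, 2 ^ i = 2 ^ m := by
  induction m with
  | zero => simp
  | succ n ih => rw [Finset.sum_range_succ, pow_succ]; omega

lemma genFib_lb (k : ℕ) : ∀ m, m + 1 ≤ k → 2 ^ m ≤ genFib k (m + 2) := by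
  intro m
  induction m using Nat.strong_induction_on with
  | _ m ih =>
    intro hm
    rw [genFib_rec]
    have h1 : ∑ j ∈ Finset.range (m + 1), genFib k (m + 1 - j)
        ≤ ∑ j ∈ Finset.range k, genFib k (m + 1 - j) :=
      Finset.sum_le_sum_of_subset (Finset.range_subset_range.mpr hm)
    have h2 : ∑ j ∈ Finset.range (m + 1), genFib k (m + 1 - j)
        = ∑ j ∈ Finset.range (m + 1), genFib k (j + 1) := by
      rw [← Finset.sum_range_reflect (fun j => genFib k (j + 1)) (m + 1)]
      apply Finset.sum_congr rfl
      intro j hj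
      simp only [Finset.mem_range] at hj
      congr 1
      omega
    have h3 : ∑ j ∈ Finset.range (m + 1), genFib k (j + 1)
        = (∑ j ∈ Finset.range m, genFib k (j + 2)) + genFib k 1 :=
      Finset.sum_range_succ' (fun j => genFib k (j + 1)) m
    have h4 : ∑ i ∈ Finset.range m, 2 ^ i ≤ ∑ j ∈ Finset.range m, genFib k (j + 2) := by
      apply Finset.sum_le_sum
      intro i hi
      simp only [Finset.mem_range] at hi
      exact ih i hi (by omega)
    have h5 := two_pow_sum m
    have h6 : genFib k 1 = 1 := by rw [genFib]
    omega

theorem stmt_5 (k : ℕ) (hk : 2 ≤ k) (α : ℝ) (hα1 : 1 < α)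
    (hroot : α ^ k = ∑ j ∈ Finset.range k, α ^ j) :
    ∀ n : ℕ, 1 ≤ n → α ^ ((n : ℤ) - 2) ≤ (genFib k n : ℝ) ∧ (genFib k n : ℝ) ≤ α ^ ((n : ℤ) - 1) := by
  have hα0 : (0 : ℝ) < α := by linarith
  have hαne : α ≠ 0 := ne_of_gt hα0
  have hα2 : α < 2 := by
    have h := geom_sum_mul α k
    rw [← hroot] at h
    nlinarith [pow_pos hα0 k]
  -- key sum identity: for any c : ℤ, ∑_{j<k} α^(c + (k-1-j)) = α^(c+k)
  have key : ∀ c : ℤ, ∑ j ∈ Finset.range k, α ^ (c + (k - 1 - j : ℕ)) = α ^ (c + k) := by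
    intro c
    have : ∀ j ∈ Finset.range k, α ^ (c + ((k - 1 - j : ℕ) : ℤ))
        = α ^ c * α ^ ((k - 1 - j : ℕ)) := by
      intro j hj
      rw [zpow_add₀ hαne, zpow_natCast]
    rw [Finset.sum_congr rfl this, ← Finset.mul_sum,
      Finset.sum_range_reflect (fun j => α ^ j) k, ← hroot, ← zpow_natCast α k,
      ← zpow_add₀ hαne]
  intro n
  induction n using Nat.strong_induction_on with
  | _ n ih =>
    intro hn
    match n, hn with
    | 1, _ =>
      have h1 : genFib k 1 = 1 := by rw [genFib]
      rw [h1]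
      constructor
      · rw [show ((1 : ℕ) : ℤ) - 2 = -1 by norm_num, zpow_neg, zpow_one, Nat.cast_one]
        exact inv_le_one_of_one_le₀ hα1.le
      · rw [show ((1 : ℕ) : ℤ) - 1 = 0 by norm_num, zpow_zero, Nat.cast_one]
    | (m + 2), _ =>
      have hrec : ((genFib k (m + 2) : ℕ) : ℝ)
          = ∑ j ∈ Finset.range k, ((genFib k (m + 1 - j) : ℕ) : ℝ) := by
        rw [genFib_rec]; push_cast; ring
      constructor
      · -- lower bound
        rw [show (((m + 2 : ℕ) : ℤ) - 2) = (m : ℤ) by push_cast; ring]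
        by_cases hmk : m + 1 ≤ k
        · -- small case: α^m ≤ 2^m ≤ genFib
          have hF := genFib_lb k m hmk
          have h2m : α ^ (m : ℤ) ≤ (2 : ℝ) ^ m := by
            rw [zpow_natCast]
            exact pow_le_pow_left₀ hα0.le hα2.le m
          have : ((2 : ℝ) ^ m) ≤ ((genFib k (m + 2) : ℕ) : ℝ) := by
            calc ((2 : ℝ) ^ m) = ((2 ^ m : ℕ) : ℝ) := by push_cast; ring
            _ ≤ _ := by exact_mod_cast hF
          linarith
        · -- big case: use recurrence and induction hypothesis
          push_neg at hmk
          have hlb : ∀ j ∈ Finset.range k,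
              α ^ ((m : ℤ) - 1 - j) ≤ ((genFib k (m + 1 - j) : ℕ) : ℝ) := by
            intro j hj
            simp only [Finset.mem_range] at hj
            have hjm : j ≤ m := by omega
            have := (ih (m + 1 - j) (by omega) (by omega)).1
            rwa [show (((m + 1 - j : ℕ) : ℤ) - 2) = (m : ℤ) - 1 - j by omega] at this
          have hsum : ∑ j ∈ Finset.range k, α ^ ((m : ℤ) - 1 - j) = α ^ (m : ℤ) := by
            have h := key ((m : ℤ) - k)
            have he : ∀ j ∈ Finset.range k,
                α ^ ((m : ℤ) - k + ((k - 1 - j : ℕ) : ℤ)) = α ^ ((m : ℤ) - 1 - j) := by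
              intro j hj
              simp only [Finset.mem_range] at hj
              congr 1
              omega
            rw [Finset.sum_congr rfl he] at h
            rw [h]
            congr 1
            ring
          calc α ^ (m : ℤ) = ∑ j ∈ Finset.range k, α ^ ((m : ℤ) - 1 - j) := hsum.symm
            _ ≤ ∑ j ∈ Finset.range k, ((genFib k (m + 1 - j) : ℕ) : ℝ) :=
                Finset.sum_le_sum hlb
            _ = _ := hrec.symm
      · -- upper bound
        rw [show (((m + 2 : ℕ) : ℤ) - 1) = (m : ℤ) + 1 by push_cast; ring]
        have hub : ∀ j ∈ Finset.range k,
            ((genFib k (m + 1 - j) : ℕ) : ℝ) ≤ α ^ ((m : ℤ) - j) := by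
          intro j hj
          by_cases hjm : j ≤ m
          · have := (ih (m + 1 - j) (by omega) (by omega)).2
            rwa [show (((m + 1 - j : ℕ) : ℤ) - 1) = (m : ℤ) - j by omega] at this
          · have hz : m + 1 - j = 0 := by omega
            rw [hz]
            have : genFib k 0 = 0 := by rw [genFib]
            rw [this]
            exact_mod_cast (zpow_pos hα0 _).le
        have hsum : ∑ j ∈ Finset.range k, α ^ ((m : ℤ) - j) = α ^ ((m : ℤ) + 1) := by
          have h := key ((m : ℤ) + 1 - k)
          have he : ∀ j ∈ Finset.range k,
              α ^ ((m : ℤ) + 1 - k + ((k - 1 - j : ℕ) : ℤ)) = α ^ ((m : ℤ) - j) := by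
            intro j hj
            simp only [Finset.mem_range] at hj
            congr 1
            omega
          rw [Finset.sum_congr rfl he] at h
          rw [h]
          congr 1
          ring
        calc ((genFib k (m + 2) : ℕ) : ℝ)
            = ∑ j ∈ Finset.range k, ((genFib k (m + 1 - j) : ℕ) : ℝ) := hrec
          _ ≤ ∑ j ∈ Finset.range k, α ^ ((m : ℤ) - j) := Finset.sum_le_sum hub
          _ = α ^ ((m : ℤ) + 1) := hsum
end

section
/- Let k ≥ 2, α the dominant root of ψ_k, and f_k(x) = (x-1)/(2 + (k+1)(x-2)). Then 1/2 < f_k(α) < 3/4. -/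
theorem stmt_6 (k : ℕ) (hk : 2 ≤ k) (α : ℝ) (hα1 : 1 < α)
    (hroot : α ^ k = ∑ j ∈ Finset.range k, α ^ j) :
    1 / 2 < (α - 1) / (2 + (k + 1) * (α - 2)) ∧ (α - 1) / (2 + (k + 1) * (α - 2)) < 3 / 4 := by
  obtain ⟨m, rfl⟩ : ∃ m, k = m + 2 := ⟨k - 2, by omega⟩
  have hα0 : (0:ℝ) < α := by linarith
  have hgs : (∑ j ∈ Finset.range (m+2), α ^ j) * (α - 1) = α ^ (m+2) - 1 :=
    geom_sum_mul α (m+2)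
  rw [← hroot] at hgs
  have h2 : α ^ (m+2) * (2 - α) = 1 := by linear_combination -hgs
  have hpow : 0 < α ^ (m+2) := pow_pos hα0 _
  have h3 : α < 2 := by nlinarith
  have hsum : 1 + (m+1:ℝ) * α ≤ α ^ (m+2) := by
    rw [hroot, Finset.sum_range_succ']
    have h5 : (Finset.range (m+1)).card • α ≤ ∑ i ∈ Finset.range (m+1), α ^ (i+1) :=
      Finset.card_nsmul_le_sum _ _ _ fun i _ => le_self_pow₀ hα1.le (Nat.succ_ne_zero i)
    simp only [Finset.card_range, nsmul_eq_mul, pow_zero] at h5 ⊢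
    push_cast at h5 ⊢
    linarith
  have hq : (1 + (m+1:ℝ) * α) * (2 - α) ≤ 1 := by nlinarith
  have hm : (0:ℝ) ≤ (m:ℝ) := Nat.cast_nonneg m
  push_cast
  have hD : (0:ℝ) < 2 + ((m:ℝ) + 2 + 1) * (α - 2) := by nlinarith
  constructor
  · rw [div_lt_div_iff₀ (by norm_num) hD]
    nlinarith
  · rw [div_lt_div_iff₀ hD (by norm_num)]
    nlinarith [sq_nonneg (α - 2), mul_nonneg hm (sub_nonneg.mpr hα1.le)]
end

section
/- Suppose k ≥ 2 and n, m, l ≥ 1 satisfy F_n^{(k)} = F_m^{(k)}·10^d + F_l^{(k)}, where d is the number of decimal digits of F_l^{(k)} ≥ 1 and F_m^{(k)} ≥ 1. Then m + l - 3 < n < m + l + 6. -/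
/-!
With `F = genFib k`, `F (n + 2)` counts the binary words of length `n` without `k` consecutive
ones. Cutting such a word of length `m + l - 4` into pieces of lengths `m - 2` and `l - 2`, and
conversely joining words of lengths `m - 2` and `l - 2` by a zero, gives
`F (m + l - 2) ≤ F m * F l ≤ F (m + l - 1)`. Since `F l < 10 ^ d ≤ 10 * F l`, the equation puts
`F n` strictly between `F m * F l` and `11 * F m * F l`, and `F 7 ≥ 13` then confines `n` to
`m + l - 1 ≤ n ≤ m + l + 4`.
-/

section

variable {k : ℕ}

theorem genFib_zero : genFib k 0 = 0 := by rw [genFib]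

theorem genFib_one : genFib k 1 = 1 := by rw [genFib]

theorem genFib_add_two (n : ℕ) :
    genFib k (n + 2) = ∑ j ∈ Finset.range k, genFib k (n + 1 - j) := by
  rw [genFib]

theorem genFib_le_succ (hk : 1 ≤ k) (n : ℕ) : genFib k n ≤ genFib k (n + 1) := by
  cases n with
  | zero => simp [genFib_zero]
  | succ n =>
    rw [genFib_add_two]
    simpa using Finset.single_le_sum (f := fun j => genFib k (n + 1 - j))
      (fun _ _ => Nat.zero_le _) (Finset.mem_range.2 hk)

theorem genFib_monotone (hk : 1 ≤ k) : Monotone (genFib k) :=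
  monotone_nat_of_le_succ (genFib_le_succ hk)

theorem genFib_add_le_genFib_add_two (hk : 2 ≤ k) (n : ℕ) :
    genFib k (n + 1) + genFib k n ≤ genFib k (n + 2) := by
  obtain ⟨k, rfl⟩ : ∃ k', k = k' + 2 := ⟨k - 2, by omega⟩
  rw [genFib_add_two, Finset.sum_range_succ', Finset.sum_range_succ']
  simp only [Nat.sub_zero, Nat.add_sub_cancel]
  omega

theorem thirteen_le_genFib_seven (hk : 2 ≤ k) : 13 ≤ genFib k 7 := by
  have h := genFib_add_le_genFib_add_two hk
  have h0 := h 0; have h1 := h 1; have h2 := h 2; have h3 := h 3; have h4 := h 4; have h5 := h 5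
  simp only [genFib_zero, genFib_one, Nat.reduceAdd] at h0 h1 h2 h3 h4 h5
  omega

theorem genFib_succ_mul_genFib_succ_le (a b : ℕ) :
    genFib k (a + 1) * genFib k (b + 1) ≤ genFib k (a + b + 1) := by
  induction b using Nat.strong_induction_on with
  | _ b ih =>
    cases b with
    | zero => simp [genFib_one]
    | succ b =>
      rw [genFib_add_two, show a + (b + 1) + 1 = a + b + 2 by omega, genFib_add_two,
        Finset.mul_sum]
      refine Finset.sum_le_sum fun j _ => ?_
      by_cases hj : j ≤ b
      · have := ih (b - j) (by omega)
        rwa [show b - j + 1 = b + 1 - j by omega, show a + (b - j) + 1 = a + b + 1 - j by omega]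
          at this
      · simp [show b + 1 - j = 0 by omega, genFib_zero]

theorem genFib_mul_le_genFib_add_sub_one (m l : ℕ) :
    genFib k m * genFib k l ≤ genFib k (m + l - 1) := by
  rcases m with _ | m
  · simp [genFib_zero]
  rcases l with _ | l
  · simp [genFib_zero]
  simpa [show m + 1 + (l + 1) - 1 = m + l + 1 by omega] using genFib_succ_mul_genFib_succ_le m l

theorem genFib_add_two_le_mul (a b : ℕ) :
    genFib k (a + b + 2) ≤ genFib k (a + 2) * genFib k (b + 2) := by
  induction b using Nat.strong_induction_on with
  | _ b ih =>
    have hlow : ∀ j < b, genFib k (a + b + 1 - j) ≤ genFib k (a + 2) * genFib k (b + 1 - j) := by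
      intro j hj
      have := ih (b - 1 - j) (by omega)
      rwa [show a + (b - 1 - j) + 2 = a + b + 1 - j by omega,
        show b - 1 - j + 2 = b + 1 - j by omega] at this
    rw [genFib_add_two, genFib_add_two (n := b), Finset.mul_sum]
    rcases le_or_gt k b with hkb | hbk
    · exact Finset.sum_le_sum fun j hj => hlow j ((Finset.mem_range.1 hj).trans_le hkb)
    rw [← Finset.sum_range_add_sum_Ico _ hbk.le, ← Finset.sum_range_add_sum_Ico _ hbk.le]
    refine add_le_add (Finset.sum_le_sum fun j hj => hlow j (Finset.mem_range.1 hj)) ?_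
    -- the terms with `j ≥ b` have no counterpart from the induction hypothesis; together they are
    -- at most `F (a + 2)`, the single term `j = b` on the right
    calc ∑ j ∈ Finset.Ico b k, genFib k (a + b + 1 - j)
        = ∑ i ∈ Finset.range (k - b), genFib k (a + 1 - i) := by
          rw [Finset.sum_Ico_eq_sum_range]
          exact Finset.sum_congr rfl fun i _ => by congr 1; omega
      _ ≤ ∑ i ∈ Finset.range k, genFib k (a + 1 - i) :=
          Finset.sum_le_sum_of_subset (Finset.range_subset_range.2 (by omega))
      _ = genFib k (a + 2) * genFib k (b + 1 - b) := by
          rw [← genFib_add_two, Nat.add_sub_cancel_left, genFib_one, mul_one]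
      _ ≤ ∑ j ∈ Finset.Ico b k, genFib k (a + 2) * genFib k (b + 1 - j) :=
          Finset.single_le_sum (f := fun j => genFib k (a + 2) * genFib k (b + 1 - j))
            (fun _ _ => Nat.zero_le _) (Finset.mem_Ico.2 ⟨le_rfl, hbk⟩)

theorem genFib_add_sub_two_le_mul (hk : 1 ≤ k) {m l : ℕ} (hm : 1 ≤ m) (hl : 1 ≤ l) :
    genFib k (m + l - 2) ≤ genFib k m * genFib k l := by
  rcases Nat.lt_or_ge m 2 with hm2 | hm2
  · obtain rfl : m = 1 := by omega
    rw [genFib_one, one_mul]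
    exact genFib_monotone hk (by omega)
  rcases Nat.lt_or_ge l 2 with hl2 | hl2
  · obtain rfl : l = 1 := by omega
    rw [genFib_one, mul_one]
    exact genFib_monotone hk (by omega)
  obtain ⟨a, rfl⟩ : ∃ a, m = a + 2 := ⟨m - 2, by omega⟩
  obtain ⟨b, rfl⟩ : ∃ b, l = b + 2 := ⟨l - 2, by omega⟩
  rw [show a + 2 + (b + 2) - 2 = a + b + 2 by omega]
  exact genFib_add_two_le_mul a b

end

theorem stmt_9_general (k n m l d : ℕ) (hk : 2 ≤ k) (hm : 1 ≤ m) (hl : 1 ≤ l)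
    (hFl : 1 ≤ genFib k l) (hFm : 1 ≤ genFib k m)
    (hd : d = (Nat.digits 10 (genFib k l)).length)
    (heq : genFib k n = genFib k m * 10 ^ d + genFib k l) :
    (m : ℤ) + l - 3 < n ∧ (n : ℤ) < m + l + 6 := by
  have hmono := genFib_monotone (k := k) (by omega)
  have hlt : genFib k l < 10 ^ d := hd ▸ Nat.lt_base_pow_length_digits (by norm_num)
  have hle : 10 ^ d ≤ 10 * genFib k l :=
    hd ▸ Nat.base_pow_length_digits_le 10 _ (by norm_num) (by omega)
  have lower : m + l < n + 2 := by
    by_contra! h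
    have : genFib k n ≤ genFib k m * genFib k l :=
      (hmono (by omega)).trans (genFib_add_sub_two_le_mul (by omega) hm hl)
    have : genFib k m * genFib k l < genFib k m * 10 ^ d := Nat.mul_lt_mul_of_pos_left hlt hFm
    omega
  have upper : n < m + l + 5 := by
    by_contra! h
    have : genFib k m * genFib k l * 13 ≤ genFib k n := calc
      _ ≤ genFib k (m + l - 1) * genFib k 7 :=
          Nat.mul_le_mul (genFib_mul_le_genFib_add_sub_one m l) (thirteen_le_genFib_seven hk)
      _ ≤ genFib k (m + l - 1 + 7 - 1) := genFib_mul_le_genFib_add_sub_one _ _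
      _ ≤ genFib k n := hmono (by omega)
    have : genFib k m * 10 ^ d ≤ genFib k m * (10 * genFib k l) := Nat.mul_le_mul_left _ hle
    nlinarith
  omega

theorem stmt_9 (k n m l d : ℕ) (hk : 2 ≤ k) (hn : 1 ≤ n) (hm : 1 ≤ m) (hl : 1 ≤ l)
    (hFl : 1 ≤ genFib k l) (hFm : 1 ≤ genFib k m)
    (hd : d = (Nat.digits 10 (genFib k l)).length)
    (heq : genFib k n = genFib k m * 10 ^ d + genFib k l) :
    (m : ℤ) + l - 3 < n ∧ (n : ℤ) < m + l + 6 :=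
  stmt_9_general k n m l d hk hm hl hFl hFm hd heq
end

section
/- Let e ≥ 1 and H > (4e²)^e be real numbers. If f is a real number with f ≥ 2 and f/(log f)^e < H, then f < 2^e·H·(log H)^e. -/
theorem stmt_14 (e : ℕ) (he : 1 ≤ e) (H f : ℝ) (hH : H > (4 * e ^ 2) ^ e)
    (hf : 2 ≤ f) (h : f / (Real.log f) ^ e < H) :
    f < 2 ^ e * H * (Real.log H) ^ e := by
  set E : ℝ := (e : ℝ) with hE
  have hE1 : (1:ℝ) ≤ E := by rw [hE]; exact_mod_cast he
  have hEpos : (0:ℝ) < E := by linarith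
  have hbase : (4:ℝ) ≤ 4 * E ^ 2 := by nlinarith
  have hbasepos : (0:ℝ) < 4 * E ^ 2 := by linarith
  have hHge : (4:ℝ) < H := by
    have := le_self_pow₀ (by linarith : (1:ℝ) ≤ 4 * E ^ 2) (by omega : e ≠ 0)
    calc (4:ℝ) ≤ 4 * E ^ 2 := hbase
    _ ≤ (4 * E ^ 2) ^ e := this
    _ < H := hH
  have hHpos : (0:ℝ) < H := by linarith
  have hfpos : (0:ℝ) < f := by linarith
  have logf_pos : 0 < Real.log f := Real.log_pos (by linarith)
  have logH_pos : 0 < Real.log H := Real.log_pos (by linarith)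
  have hpowpos : 0 < (Real.log f) ^ e := pow_pos logf_pos e
  have h1 : f < H * (Real.log f) ^ e := (div_lt_iff₀ hpowpos).mp h
  have key : Real.log f ≤ 2 * Real.log H := by
    by_contra hlt
    push_neg at hlt
    -- upper bound on log f
    have h2 : Real.log f < Real.log H + E * Real.log (Real.log f) := by
      have := Real.log_lt_log hfpos h1
      rwa [Real.log_mul (ne_of_gt hHpos) (ne_of_gt hpowpos), Real.log_pow] at this
    have h3 : Real.log (Real.log f) - Real.log (4 * E) ≤ Real.log f / (4 * E) - 1 := by
      have hd : Real.log (Real.log f / (4 * E)) = Real.log (Real.log f) - Real.log (4 * E) :=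
        Real.log_div (ne_of_gt logf_pos) (by positivity)
      have := Real.log_le_sub_one_of_pos (by positivity : 0 < Real.log f / (4 * E))
      linarith [hd ▸ this]
    have h4 : E * Real.log (Real.log f) ≤ E * (Real.log (4 * E) + Real.log f / (4 * E) - 1) :=
      mul_le_mul_of_nonneg_left (by linarith) (le_of_lt hEpos)
    have h5 : E * (Real.log f / (4 * E)) = Real.log f / 4 := by
      field_simp
    have h6 : Real.log f < 4 * (E * Real.log (4 * E)) - 4 * E := by
      have : E * (Real.log (4 * E) + Real.log f / (4 * E) - 1)
          = E * Real.log (4 * E) + Real.log f / 4 - E := by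
        rw [mul_sub, mul_add, h5, mul_one]
      linarith [h2, h4, this ▸ h4]
    -- lower bound on log f
    have hlogH : E * Real.log (4 * E ^ 2) < Real.log H := by
      have := Real.log_lt_log (pow_pos hbasepos e) hH
      rwa [Real.log_pow] at this
    have hsq : Real.log (4 * E ^ 2) = 2 * Real.log (2 * E) := by
      have : (4:ℝ) * E ^ 2 = (2 * E) ^ 2 := by ring
      rw [this, Real.log_pow]; norm_num
    have heq : Real.log (4 * E) = Real.log 2 + Real.log (2 * E) := by
      have : (4:ℝ) * E = 2 * (2 * E) := by ring
      rw [this, Real.log_mul (by norm_num) (by positivity)]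
    have hexp : E * Real.log (4 * E) = E * Real.log 2 + E * Real.log (2 * E) := by
      rw [heq]; ring
    have hElog2 : E * Real.log 2 < E * 1 :=
      mul_lt_mul_of_pos_left (by linarith [Real.log_two_lt_d9]) hEpos
    have hlow : 4 * (E * Real.log (2 * E)) < Real.log f := by
      have : E * Real.log (4 * E ^ 2) = 2 * (E * Real.log (2 * E)) := by rw [hsq]; ring
      linarith [this ▸ hlogH]
    linarith
  -- finish
  have hple : (Real.log f) ^ e ≤ (2 * Real.log H) ^ e :=
    pow_le_pow_left₀ (le_of_lt logf_pos) key e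
  calc f < H * (Real.log f) ^ e := h1
  _ ≤ H * (2 * Real.log H) ^ e := by
      exact mul_le_mul_of_nonneg_left hple (le_of_lt hHpos)
  _ = 2 ^ e * H * (Real.log H) ^ e := by rw [mul_pow]; ring
end

section
/- Let k ≥ 2, α the dominant root of ψ_k(x) = x^k - x^{k-1} - ... - 1, and f_k(x) = (x-1)/(2+(k+1)(x-2)). Then for all n ≥ 1, |F_n^{(k)} - f_k(α)·α^{n-1}| < 1/2. -/
open Finset

lemma bern_strict (a : ℝ) (ha : 0 < a) (k : ℕ) (hk : 2 ≤ k) : 1 + k * a < (1 + a) ^ k := by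
  obtain ⟨m, rfl⟩ : ∃ m, k = m + 1 := ⟨k - 1, by omega⟩
  have hm : 1 ≤ m := by omega
  have h1 : 1 + (m:ℝ) * a ≤ (1 + a) ^ m := one_add_mul_le_pow (by linarith) m
  have h3 : (1 + (m:ℝ) * a) * (1 + a) ≤ (1 + a) ^ m * (1 + a) :=
    mul_le_mul_of_nonneg_right h1 (by linarith)
  have hm' : (1:ℝ) ≤ (m:ℝ) := by exact_mod_cast hm
  have h2 : (1 + a) ^ (m+1) = (1 + a) ^ m * (1 + a) := by ring
  push_cast
  nlinarith [mul_pos ha ha, h2]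

lemma quad_upper (x : ℝ) (hx0 : 0 ≤ x) (hx1 : x ≤ 1) :
    ∀ m : ℕ, (1 - x) ^ m ≤ 1 - m * x + m ^ 2 * x ^ 2 := by
  intro m
  induction m with
  | zero => simp
  | succ n ih =>
    have h2 : (1 - x) ^ n * (1 - x) ≤ (1 - n * x + n ^ 2 * x ^ 2) * (1 - x) :=
      mul_le_mul_of_nonneg_right ih (by linarith)
    have h1 : (1 - x) ^ (n+1) = (1 - x) ^ n * (1 - x) := by ring
    push_cast
    nlinarith [sq_nonneg x, mul_nonneg (mul_nonneg (Nat.cast_nonneg n : (0:ℝ) ≤ n) hx0) (mul_nonneg hx0 hx0), sq_nonneg ((n:ℝ)*x), mul_nonneg (mul_nonneg (mul_nonneg (Nat.cast_nonneg n : (0:ℝ) ≤ n) (Nat.cast_nonneg n : (0:ℝ) ≤ n)) hx0) (mul_nonneg hx0 hx0)]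

lemma nat_2j : ∀ j : ℕ, 2*j ≤ 2^j := by
  intro j
  induction j with
  | zero => norm_num
  | succ n ih =>
    rcases Nat.eq_zero_or_pos n with h | h
    · subst h; norm_num
    · have h2 : 2 ≤ 2^n := by
        calc 2 = 2^1 := by norm_num
        _ ≤ 2^n := Nat.pow_le_pow_right (by norm_num) h
      have : 2^(n+1) = 2*2^n := by ring
      omega
lemma nat_4k : ∀ k : ℕ, 4 ≤ k → 4*k ≤ 2^k := by
  intro k hk
  induction k with
  | zero => omega
  | succ n ih =>
    rcases Nat.lt_or_ge n 4 with h | h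
    · interval_cases n <;> first | (exfalso; omega) | norm_num
    · have := ih (by omega)
      have : 2^(n+1) = 2*2^n := by ring
      omega
lemma nat_k2 : ∀ k : ℕ, 4 ≤ k → k^2 ≤ 2^k := by
  intro k hk
  induction k with
  | zero => omega
  | succ n ih =>
    rcases Nat.lt_or_ge n 4 with h | h
    · interval_cases n <;> first | (exfalso; omega) | norm_num
    · have h1 := ih (by omega)
      have h2 : 2^(n+1) = 2*2^n := by ring
      have h3 : (n+1)^2 ≤ 2*n^2 := by nlinarith
      omega
lemma nat_8k1 : ∀ k : ℕ, 4 ≤ k → 8*(k+1) ≤ 3*2^k := by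
  intro k hk
  induction k with
  | zero => omega
  | succ n ih =>
    rcases Nat.lt_or_ge n 4 with h | h
    · interval_cases n <;> first | (exfalso; omega) | norm_num
    · have h1 := ih (by omega)
      have h2 : 2^(n+1) = 2*2^n := by ring
      omega

set_option maxHeartbeats 2000000 in
/-- The key analytic estimate for base cases n = t+2 ≤ k. -/
lemma base_est (k : ℕ) (hk : 2 ≤ k) (α d f : ℝ) (hα1 : 1 < α)
    (hd : d = 2 - α) (hd0 : 0 < d) (hd1 : d < 1)
    (hkd : (k:ℝ)*d < 1) (hdlt : d*2^k < 2) (hkey' : d*(2-d)^k = 1)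
    (hdenpos : (0:ℝ) < 2 - ((k:ℝ)+1)*d) (hfa : f*(2 - ((k:ℝ)+1)*d) = 1 - d) :
    ∀ t : ℕ, t+2 ≤ k → |(2:ℝ)^t - f*α^(t+1)| < 1/2 := by
  have hk2 : (2:ℝ) ≤ (k:ℝ) := by exact_mod_cast hk
  intro t ht
  obtain ⟨A, hAdef⟩ : ∃ A : ℝ, A = (2:ℝ)^t := ⟨_, rfl⟩
  obtain ⟨P, hPdef⟩ : ∃ P : ℝ, P = (1 - d/2)^(t+1) := ⟨_, rfl⟩
  have hA1 : (1:ℝ) ≤ A := by rw [hAdef]; exact one_le_pow₀ (by norm_num)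
  have hP0 : (0:ℝ) ≤ P := by rw [hPdef]; exact pow_nonneg (by linarith) _
  have hPl : 1 - ((t:ℝ)+1)*(d/2) ≤ P := by
    have hb := one_add_mul_le_pow (a := -(d/2)) (by linarith) (t+1)
    push_cast at hb
    calc (1:ℝ) - ((t:ℝ)+1)*(d/2) = 1 + ((t:ℝ)+1)*(-(d/2)) := by ring
    _ ≤ (1 + -(d/2))^(t+1) := hb
    _ = P := by rw [hPdef]; ring_nf
  have hPu : P ≤ 1 - ((t:ℝ)+1)*(d/2) + ((t:ℝ)+1)^2*(d/2)^2 := by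
    have hq := quad_upper (d/2) (by linarith) (by linarith) (t+1)
    push_cast at hq
    rw [hPdef]
    exact hq
  have hαP : α^(t+1) = (2*A) * P := by
    rw [show α = 2*(1-d/2) from by rw [hd]; ring, mul_pow, hPdef, hAdef, pow_succ]
    ring
  have hkeyf : f * α^(t+1) * (2 - ((k:ℝ)+1)*d) = (1-d)*(2*A)*P := by
    rw [hαP]; linear_combination (2*A*P)*hfa
  have hmle : (t:ℝ)+1 ≤ (k:ℝ)-1 := by
    have : ((t:ℕ):ℝ) + 2 ≤ (k:ℝ) := by exact_mod_cast ht
    linarith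
  have hnn : (0:ℝ) ≤ (1-d)*(2*A) := mul_nonneg (by linarith) (by linarith)
  rw [abs_lt]
  constructor
  · -- need f*α^(t+1) < A + 1/2
    have hcore : (1-d)*(2*A)*P < (A + 1/2)*(2 - ((k:ℝ)+1)*d) := by
      clear hkeyf hαP
      rcases (by omega : k = 2 ∨ k = 3 ∨ 4 ≤ k) with hkk | hkk | hk4
      · subst hkk
        have ht0 : t = 0 := by omega
        subst ht0
        have hd2 : d < 1/2 := by norm_num at hdlt; linarith
        norm_num at hAdef hPdef ⊢
        subst hAdef
        subst hPdef
        nlinarith [hd0, hd2,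
          mul_pos (show (0:ℝ) < 1-2*d from by linarith) (show (0:ℝ) < d+2 from by linarith)]
      · subst hkk
        have hd4 : d < 1/4 := by norm_num at hdlt; linarith
        rcases (by omega : t = 0 ∨ t = 1) with ht0 | ht0 <;> subst ht0 <;>
          norm_num at hAdef hPdef ⊢ <;> subst hAdef <;> subst hPdef
        · nlinarith [hd4, mul_pos hd0 (show (0:ℝ) < 1-d from by linarith)]
        · nlinarith [hd4, hd0,
            mul_pos hd0 (show (0:ℝ) < 2-5*d+d^2 from by nlinarith [hd4, sq_nonneg d])]
      · -- general k ≥ 4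
        have h4k : (4:ℝ)*k ≤ 2^k := by exact_mod_cast nat_4k k hk4
        have hk2k : ((k:ℝ))^2 ≤ 2^k := by exact_mod_cast nat_k2 k hk4
        have h8k1 : 8*((k:ℝ)+1) ≤ 3*2^k := by exact_mod_cast nat_8k1 k hk4
        have h2k : (0:ℝ) < 2^k := by positivity
        have hkd12 : (k:ℝ)*d ≤ 1/2 := by
          have c1 : (k:ℝ)*(d*2^k) ≤ (k:ℝ)*2 :=
            mul_le_mul_of_nonneg_left hdlt.le (Nat.cast_nonneg k)
          have c3 : ((k:ℝ)*d)*2^k ≤ (1/2)*2^k := by linarith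
          exact le_of_mul_le_mul_right c3 h2k
        have hhalf : ((2:ℝ) - d)^k = 2^k*(1-d/2)^k := by rw [← mul_pow]; ring_nf
        have hb2' : 1 - (k:ℝ)*(d/2) ≤ (1-d/2)^k := by
          have hb := one_add_mul_le_pow (a := -(d/2)) (by linarith) k
          calc (1:ℝ) - (k:ℝ)*(d/2) = 1 + (k:ℝ)*(-(d/2)) := by ring
          _ ≤ (1 + -(d/2))^k := hb
          _ = (1-d/2)^k := by ring_nf
        have heq : (d*2^k)*(1-d/2)^k = 1 := by
          have hc := hkey'
          rw [hhalf] at hc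
          linear_combination hc
        have hu : d*2^k ≤ 4/3 := by
          have hb34 : (3:ℝ)/4 ≤ (1-d/2)^k := by linarith
          have c1 : (d*2^k)*(3/4) ≤ (d*2^k)*(1-d/2)^k :=
            mul_le_mul_of_nonneg_left hb34 (by positivity)
          rw [heq] at c1
          linarith
        have hden32 : ((k:ℝ)+1)*d ≤ 1/2 := by
          have c1 : ((k:ℝ)+1)*(d*2^k) ≤ ((k:ℝ)+1)*(4/3) :=
            mul_le_mul_of_nonneg_left hu (by positivity)
          have c3 : (((k:ℝ)+1)*d)*2^k ≤ (1/2)*2^k := by linarith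
          exact le_of_mul_le_mul_right c3 h2k
        have hjcast : ((k - 2 - t : ℕ):ℝ) = (k:ℝ) - 2 - t := by
          rw [Nat.cast_sub (by omega), Nat.cast_sub (by omega)]
          push_cast; ring
        have hj2j : 2*((k - 2 - t : ℕ):ℝ) ≤ 2^(k - 2 - t) := by
          exact_mod_cast nat_2j (k - 2 - t)
        have hAj : A * (2:ℝ)^(k - 2 - t) = 2^(k-2) := by
          rw [hAdef, ← pow_add, show t + (k - 2 - t) = k - 2 from by omega]
        have h2k2 : (2:ℝ)^k = 2^(k-2)*4 := by
          have hpa := pow_add (2:ℝ) (k-2) 2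
          rw [show k-2+2 = k from by omega] at hpa
          rw [hpa]; norm_num
        have e3 : (2:ℝ)^(k-2)*d ≤ 1/3 := by
          have : d*2^k = (2^(k-2)*d)*4 := by rw [h2k2]; ring
          linarith
        have T1 : 2*A*(((k:ℝ)-2-t)*d) ≤ 1/3 := by
          rw [← hjcast]
          have e1 : (2*((k - 2 - t : ℕ):ℝ))*(A*d) ≤ (2:ℝ)^(k - 2 - t)*(A*d) :=
            mul_le_mul_of_nonneg_right hj2j (mul_nonneg (by linarith) hd0.le)
          have e2 : (2:ℝ)^(k - 2 - t)*(A*d) = 2^(k-2)*d := by rw [← hAj]; ring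
          linarith
        have hAle : A ≤ 2^(k-2) := by
          have h1 : (1:ℝ) ≤ 2^(k - 2 - t) := one_le_pow₀ (by norm_num)
          have := mul_le_mul_of_nonneg_left h1 (by linarith : (0:ℝ) ≤ A)
          rw [mul_one] at this
          linarith [hAj]
        have s4 : d*(k:ℝ)^2 ≤ 4/3 := by
          have c1 : ((k:ℝ)^2)*(d*2^k) ≤ ((k:ℝ)^2)*(4/3) :=
            mul_le_mul_of_nonneg_left hu (by positivity)
          have c3 : (d*(k:ℝ)^2)*2^k ≤ (4/3)*2^k := by nlinarith [c1, hk2k]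
          exact le_of_mul_le_mul_right c3 h2k
        have T2 : 2*A*(((t:ℝ)+1)*d^2 + ((t:ℝ)+1)^2*(d^2/2)) ≤ 8/9 := by
          have s1 : 2*((t:ℝ)+1) + ((t:ℝ)+1)^2 ≤ (k:ℝ)^2 := by nlinarith [hmle, hk2]
          have s2 : A*(d^2*(2*((t:ℝ)+1) + ((t:ℝ)+1)^2)) ≤ 2^(k-2)*(d^2*(k:ℝ)^2) := by
            apply mul_le_mul hAle ?_ (by positivity) (by positivity)
            exact mul_le_mul_of_nonneg_left s1 (by positivity)
          have s5 : ((2:ℝ)^(k-2)*d)*(d*(k:ℝ)^2) ≤ (1/3)*(4/3) := by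
            apply mul_le_mul e3 s4 (by positivity) (by norm_num)
          nlinarith [s2, s5]
        have hAd3 : (0:ℝ) ≤ A*(((t:ℝ)+1)^2*d^3) :=
          mul_nonneg (by linarith) (mul_nonneg (by positivity) (by positivity))
        have hfinal : (1-d)*(2*A)*(1 - ((t:ℝ)+1)*(d/2) + ((t:ℝ)+1)^2*(d/2)^2)
            < (A+1/2)*(2-((k:ℝ)+1)*d) := by
          nlinarith [T1, T2, hden32, hAd3]
        have hPQ : (1-d)*(2*A)*P ≤ (1-d)*(2*A)*(1 - ((t:ℝ)+1)*(d/2) + ((t:ℝ)+1)^2*(d/2)^2) :=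
          mul_le_mul_of_nonneg_left hPu hnn
        linarith
    have hchain : f * α^(t+1) * (2 - ((k:ℝ)+1)*d) < (A + 1/2)*(2 - ((k:ℝ)+1)*d) := by
      rw [hkeyf]; exact hcore
    have := lt_of_mul_lt_mul_right hchain hdenpos.le
    rw [hAdef] at this
    linarith
  · -- need f*α^(t+1) > A - 1/2
    have hstepA : (1-d)*(2*A)*(1 - ((t:ℝ)+1)*(d/2)) ≤ (1-d)*(2*A)*P :=
      mul_le_mul_of_nonneg_left hPl hnn
    have hstepB : (A - 1/2) * (2 - ((k:ℝ)+1)*d) < (1-d)*(2*A)*(1 - ((t:ℝ)+1)*(d/2)) := by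
      have hkd2' : ((k:ℝ)+1)*d < 2 := by nlinarith [hkd, hd1]
      have h1 : (0:ℝ) ≤ A*(((k:ℝ)-2-t)*d) :=
        mul_nonneg (by linarith) (mul_nonneg (by linarith) hd0.le)
      have h2 : (0:ℝ) ≤ A*(((t:ℝ)+1)*d^2) :=
        mul_nonneg (by linarith) (mul_nonneg (by positivity) (sq_nonneg d))
      nlinarith [h1, h2, hkd2']
    have hchain : (A - 1/2) * (2 - ((k:ℝ)+1)*d) < f * α^(t+1) * (2 - ((k:ℝ)+1)*d) := by
      rw [hkeyf]; linarith
    have := lt_of_mul_lt_mul_right hchain hdenpos.le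
    rw [hAdef] at this
    linarith

lemma two_pow_sum_s15 (j : ℕ) : ∑ i ∈ range j, 2 ^ i = 2 ^ j - 1 := by
  induction j with
  | zero => simp
  | succ n ih =>
    rw [Finset.sum_range_succ, ih]
    have : 1 ≤ 2 ^ n := Nat.one_le_two_pow
    omega

lemma genFib_val (k : ℕ) (hk : 2 ≤ k) : ∀ j : ℕ, j + 1 ≤ k → genFib k (j + 2) = 2 ^ j := by
  intro j
  induction j using Nat.strong_induction_on with
  | _ j ih =>
    intro hj
    rw [genFib]
    rw [← Finset.sum_subset (Finset.range_subset_range.2 hj : range (j+1) ⊆ range k)]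
    · rw [Finset.sum_range_succ]
      have h1 : j + 1 - j = 1 := by omega
      rw [h1]
      have : ∀ i ∈ range j, genFib k (j + 1 - i) = 2 ^ (j - 1 - i) := by
        intro i hi
        simp only [Finset.mem_range] at hi
        have : j + 1 - i = (j - 1 - i) + 2 := by omega
        rw [this, ih (j - 1 - i) (by omega) (by omega)]
      rw [Finset.sum_congr rfl this]
      have := Finset.sum_range_reflect (fun i => 2 ^ i) j
      rw [this, two_pow_sum_s15]
      have : 1 ≤ 2 ^ j := Nat.one_le_two_pow
      simp [genFib]; omega
    · intro x hx hx2
      simp only [Finset.mem_range, not_lt] at hx2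
      have : j + 1 - x = 0 := by omega
      rw [this, genFib]

lemma genFib_sum (k : ℕ) (hk : 1 ≤ k) (s : ℕ) :
    genFib k (s + 1 + k) = ∑ i ∈ Finset.range k, genFib k (s + 1 + i) := by
  obtain ⟨K, rfl⟩ : ∃ K, k = K + 1 := ⟨k - 1, by omega⟩
  have h : s + 1 + (K + 1) = (s + K) + 2 := by omega
  rw [h, genFib]
  have := Finset.sum_range_reflect (fun i => genFib (K+1) (s + 1 + i)) (K + 1)
  rw [← this]
  apply Finset.sum_congr rfl
  intro j hj
  simp only [Finset.mem_range] at hj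
  congr 1
  omega

lemma genFib_rec_s15 (k : ℕ) (hk : 1 ≤ k) (m : ℕ) (hm : 1 ≤ m) :
    genFib k (m + k + 1) + genFib k m = 2 * genFib k (m + k) := by
  obtain ⟨s, rfl⟩ : ∃ s, m = s + 1 := ⟨m - 1, by omega⟩
  have h1 : s + 1 + k + 1 = (s + 1 + 1) + k := by omega
  have e3 := genFib_sum k hk s
  have e4 := genFib_sum k hk (s + 1)
  have e1 : ∑ i ∈ Finset.range (k+1), genFib k (s + 1 + i)
      = ∑ i ∈ Finset.range k, genFib k (s + 1 + i) + genFib k (s + 1 + k) := Finset.sum_range_succ _ _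
  have e2 : ∑ i ∈ Finset.range (k+1), genFib k (s + 1 + i)
      = (∑ i ∈ Finset.range k, genFib k (s + 1 + 1 + i)) + genFib k (s + 1) := by
    rw [Finset.sum_range_succ']
    congr 1
    · apply Finset.sum_congr rfl
      intro j hj
      congr 1
      omega
  rw [h1, e4, e3]
  omega

set_option maxHeartbeats 1000000 in
theorem stmt_15 (k : ℕ) (hk : 2 ≤ k) (α : ℝ) (hα1 : 1 < α)
    (hroot : α ^ k = ∑ j ∈ Finset.range k, α ^ j) :
    ∀ n : ℕ, 1 ≤ n →
      |(genFib k n : ℝ) - (α - 1) / (2 + (k + 1) * (α - 2)) * α ^ (n - 1)| < 1 / 2 := by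
  have hα0 : (0:ℝ) < α := by linarith
  have hkey : α ^ k * (2 - α) = 1 := by
    have h := geom_sum_mul α k
    rw [← hroot] at h
    nlinarith [h]
  have hαk : (0:ℝ) < α ^ k := pow_pos hα0 k
  have hα2 : α < 2 := by nlinarith
  set d : ℝ := 2 - α with hd
  have h2d : (2:ℝ) - d = α := by rw [hd]; ring
  have hd0 : 0 < d := by simp only [hd]; linarith
  have hd1 : d < 1 := by simp only [hd]; linarith
  have hkey' : d * (2 - d) ^ k = 1 := by
    rw [h2d]
    have : α ^ k * (2 - α) = 1 := by rw [hd] at hkey; exact hkey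
    linarith [this]
  have hkd : (k:ℝ) * d < 1 := by
    by_contra h
    push_neg at h
    have hb : 1 + (k:ℝ) * (1 - d) < (2 - d) ^ k := by
      have := bern_strict (1 - d) (by linarith) k hk
      have e : (1:ℝ) + (1 - d) = 2 - d := by ring
      rwa [e] at this
    have hmul : d * (1 + (k:ℝ) * (1 - d)) < d * (2 - d) ^ k :=
      mul_lt_mul_of_pos_left hb hd0
    have hge : (1 - d) * 1 ≤ (1 - d) * ((k:ℝ) * d) :=
      mul_le_mul_of_nonneg_left h (by linarith)
    nlinarith [hmul, hge]
  have h2k : (0:ℝ) < 2 ^ k := by positivity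
  have hdlt : d * 2 ^ k < 2 := by
    by_contra h
    push_neg at h
    have hhalf : ((2:ℝ) - d) ^ k = 2 ^ k * (1 - d/2) ^ k := by
      rw [← mul_pow]; ring_nf
    have hb2 : 1 - (k:ℝ) * (d/2) ≤ (1 - d/2) ^ k := by
      have := one_add_mul_le_pow (a := -(d/2)) (by linarith) k
      have e : (1:ℝ) + -(d/2) = 1 - d/2 := by ring
      rw [e] at this
      have e2 : (1:ℝ) - (k:ℝ) * (d/2) = 1 + (k:ℝ) * -(d/2) := by ring
      rw [e2]; exact this
    have hp : (1 - (k:ℝ)*(d/2)) * 2 ≤ (1 - d/2)^k * (d * 2^k) := by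
      have hnn : (0:ℝ) ≤ (1 - d/2)^k := pow_nonneg (by linarith) k
      have := mul_le_mul hb2 h (by norm_num) hnn
      linarith [this]
    have : d * (2 - d)^k = (1 - d/2)^k * (d * 2^k) := by rw [hhalf]; ring
    nlinarith [hp, hkd]
  have hden_eq : 2 + ((k:ℝ) + 1) * (α - 2) = 2 - ((k:ℝ)+1) * d := by rw [hd]; ring
  have hden : (0:ℝ) < 2 + ((k:ℝ) + 1) * (α - 2) := by
    rw [hden_eq]
    have : ((k:ℝ)+1)*d = (k:ℝ)*d + d := by ring
    linarith [this, hkd, hd1]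
  set f : ℝ := (α - 1) / (2 + (↑k + 1) * (α - 2)) with hfdef
  have hf : f * (2 + ((k:ℝ) + 1) * (α - 2)) = α - 1 := div_mul_cancel₀ _ (ne_of_gt hden)
  set E : ℕ → ℝ := fun n => (genFib k n : ℝ) - f * α ^ (n - 1) with hE
  have hEe : ∀ t : ℕ, E (t + 1) = (genFib k (t+1) : ℝ) - f * α ^ t := by
    intro t; simp only [hE, Nat.add_sub_cancel]
  have hsum1 : d * ∑ i ∈ Finset.range k, α ^ i = 1 := by
    have hgs := geom_sum_mul α k
    have h2 : (d * ∑ i ∈ Finset.range k, α ^ i) * (α - 1) = 1 * (α - 1) := by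
      calc (d * ∑ i ∈ Finset.range k, α ^ i) * (α - 1)
          = d * ((∑ i ∈ Finset.range k, α ^ i) * (α - 1)) := by ring
        _ = d * (α ^ k - 1) := by rw [hgs]
        _ = 1 * (α - 1) := by rw [hd]; nlinarith [hkey]
    exact mul_right_cancel₀ (by intro h; rw [sub_eq_zero] at h; exact absurd h.symm (ne_of_lt hα1) : α - (1:ℝ) ≠ 0) h2
  -- base cases
  have hbase : ∀ n, 1 ≤ n → n ≤ k → |E n| < 1/2 := by
    have hdenpos : (0:ℝ) < 2 - ((k:ℝ)+1)*d := by rw [← hden_eq]; exact hden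
    have hfa : f * (2 - ((k:ℝ)+1)*d) = 1 - d := by
      rw [← hden_eq, hf, hd]; ring
    have hk2 : (2:ℝ) ≤ (k:ℝ) := by exact_mod_cast hk
    have hbig := base_est k hk α d f hα1 hd hd0 hd1 hkd hdlt hkey' hdenpos hfa
    have hb1 : |E 1| < 1/2 := by
      have hE1 : E 1 = 1 - f := by
        have h0 := hEe 0
        norm_num at h0
        rw [h0]
        norm_num [genFib]
      rw [hE1, abs_lt]
      constructor
      · have hc : (3/2 - f) * (2 - ((k:ℝ)+1)*d) = 2 + d - (3/2)*(((k:ℝ)+1)*d) := by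
          linear_combination -hfa
        nlinarith [hc, hdenpos, hkd, hd0, hd1]
      · have hc : (f - 1/2) * (2 - ((k:ℝ)+1)*d) = ((k:ℝ)-1)*d/2 := by
          linear_combination hfa
        nlinarith [hc, hdenpos, hk2, hd0]
    intro n hn1 hnk
    obtain ⟨m, rfl⟩ : ∃ m, n = m + 1 := ⟨n - 1, by omega⟩
    rcases Nat.eq_zero_or_pos m with h | h
    · subst h; exact hb1
    · obtain ⟨t, rfl⟩ : ∃ t, m = t + 1 := ⟨m - 1, by omega⟩
      have hEt : E (t+1+1) = (2:ℝ)^t - f * α^(t+1) := by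
        rw [hEe (t+1), show t+1+1 = t+2 from by omega,
           genFib_val k hk t (by omega)]
        push_cast; ring
      rw [hEt]
      exact hbig t (by omega)
  obtain ⟨K, rfl⟩ : ∃ K, k = K + 2 := ⟨k - 2, by omega⟩
  have hrec : ∀ s : ℕ, E (s + 1 + (K+2) + 1) + E (s+1) = 2 * E (s + 1 + (K+2)) := by
    intro s
    have hN := genFib_rec_s15 (K+2) (by omega) (s+1) (by omega)
    have hNc : (genFib (K+2) ((s+K+3)+1) : ℝ) + (genFib (K+2) (s+1) : ℝ)
        = 2 * (genFib (K+2) ((s+K+2)+1) : ℝ) := by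
      have e1 : s + 1 + (K+2) + 1 = (s+K+3)+1 := by omega
      have e2 : s + 1 + (K+2) = (s+K+2)+1 := by omega
      rw [e1, e2] at hN
      exact_mod_cast hN
    have e1 : s + 1 + (K+2) + 1 = (s+K+3)+1 := by omega
    have e2 : s + 1 + (K+2) = (s+K+2)+1 := by omega
    rw [e1, e2, hEe (s+K+3), hEe s, hEe (s+K+2)]
    have hp : α ^ (K+3) + 1 = 2 * α ^ (K+2) := by
      have hh : α ^ (K+2) * α = α ^ (K+3) := by rw [← pow_succ]
      nlinarith [hkey]
    have q1 : α ^ (s+K+3) = α ^ s * α ^ (K+3) := by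
      rw [show s+K+3 = s+(K+3) from by omega, pow_add]
    have q2 : α ^ (s+K+2) = α ^ s * α ^ (K+2) := by
      rw [show s+K+2 = s+(K+2) from by omega, pow_add]
    rw [q1, q2]
    linear_combination hNc - f * α ^ s * hp
  have hA : ∀ m, 1 ≤ m → E (m + (K+2)) = d * ∑ j ∈ Finset.range (K+2), α ^ (K+2-1-j) * E (m+j) := by
    have hsub : ∀ j : ℕ, K + 2 - 1 - j = K + 1 - j := fun j => by omega
    have hkeyd : α ^ (K+2) * d = 1 := by rw [hd]; exact hkey
    intro m hm
    induction m, hm using Nat.le_induction with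
    | base =>
      simp only [hsub]
      have hE1 : E 1 = 1 - f := by
        have := hEe 0
        norm_num at this
        rw [this]
        norm_num [genFib]
      have hsplit : ∑ j ∈ Finset.range (K+2), α ^ (K+1-j) * E (1+j)
          = (∑ j ∈ Finset.range (K+1), (α^(K-j) * (2:ℝ)^j - f * α^(K-j) * α^(j+1)))
            + α^(K+1) * (1 - f) := by
        rw [Finset.sum_range_succ' (fun j => α ^ (K+1-j) * E (1+j)) (K+1)]
        congr 1
        · apply Finset.sum_congr rfl
          intro j hj
          simp only [Finset.mem_range] at hj
          have e1 : K+1-(j+1) = K-j := by omega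
          have e2 : 1+(j+1) = (j+1)+1 := by omega
          rw [e1, e2, hEe (j+1)]
          have e3 : j + 1 + 1 = j + 2 := by omega
          rw [e3, genFib_val (K+2) (by omega) j (by omega)]
          push_cast
          ring
        · have e1 : K+1-0 = K+1 := by omega
          have e2 : 1+0 = 1 := by omega
          rw [e1, e2, hE1]
      rw [hsplit, Finset.sum_sub_distrib]
      have hS2 : (∑ j ∈ Finset.range (K+1), α ^ (K-j) * (2:ℝ)^j) * d = 2^(K+1) - α^(K+1) := by
        have hg2 := geom_sum₂_mul (2:ℝ) α (K+1)
        have e : ∑ j ∈ Finset.range (K+1), α ^ (K-j) * (2:ℝ)^j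
            = ∑ j ∈ Finset.range (K+1), (2:ℝ)^j * α^(K+1-1-j) := by
          apply Finset.sum_congr rfl
          intro j hj
          simp only [Finset.mem_range] at hj
          have : K+1-1-j = K-j := by omega
          rw [this]; ring
        rw [e, hd]
        exact hg2
      have hS3 : ∑ j ∈ Finset.range (K+1), f * α^(K-j) * α^(j+1) = ((K:ℝ)+1) * (f * α^(K+1)) := by
        have e : ∀ j ∈ Finset.range (K+1), f * α^(K-j) * α^(j+1) = f * α^(K+1) := by
          intro j hj
          simp only [Finset.mem_range] at hj
          rw [mul_assoc, ← pow_add]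
          congr 2
          omega
        rw [Finset.sum_congr rfl e, Finset.sum_const, Finset.card_range]
        push_cast
        ring
      rw [hS3]
      have hgoalL : E (1+(K+2)) = 2^(K+1) - f * α^(K+2) := by
        have e : 1 + (K+2) = ((K+1)+1)+1 := by omega
        rw [e, hEe ((K+1)+1)]
        have e3 : K + 1 + 1 + 1 = (K+1) + 2 := by omega
        rw [e3, genFib_val (K+2) (by omega) (K+1) (by omega)]
        push_cast
        ring
      rw [hgoalL]
      have hf' : f * (2 - ((K:ℝ)+3) * d) = 1 - d := by
        have e : 2 - ((K:ℝ)+3) * d = 2 + ((((K:ℕ)+2:ℕ) : ℝ) + 1) * (α - 2) := by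
          push_cast
          rw [hd]
          ring
        rw [e, hf]
        rw [hd]
        ring
      have hαd : α = 2 - d := by rw [hd]; ring
      have hbr : d - f*d - 1 - f*d*((K:ℝ)+1) + f*α = 0 := by
        rw [hαd]
        linear_combination hf'
      have hpow2 : α^(K+2) = α^(K+1) * α := by rw [← pow_succ]
      rw [hpow2]
      linear_combination (-1:ℝ) * hS2 - α^(K+1) * hbr
    | succ m hm ih =>
      have c1 : ∀ j ∈ Finset.range (K+1), α * (α^(K+1-(j+1)) * E (m+(j+1))) = α^(K+1-j) * E (m+1+j) := by
        intro j hj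
        simp only [Finset.mem_range] at hj
        have e1 : K+1-j = (K-j)+1 := by omega
        have e2 : K+1-(j+1) = K-j := by omega
        have e3 : m+(j+1) = m+1+j := by omega
        rw [e1, e2, e3, pow_succ]
        ring
      have hL : ∑ j ∈ Finset.range (K+2), α^(K+2-1-j) * E (m+1+j)
          = (∑ j ∈ Finset.range (K+1), α^(K+1-j) * E (m+1+j)) + E (m+(K+2)) := by
        simp only [hsub]
        rw [Finset.sum_range_succ]
        congr 1
        have e1 : K+1-(K+1) = 0 := by omega
        have e2 : m+1+(K+1) = m+(K+2) := by omega
        rw [e1, e2, pow_zero, one_mul]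
      have hR : α * ∑ j ∈ Finset.range (K+2), α^(K+2-1-j) * E (m+j)
          = (∑ j ∈ Finset.range (K+1), α^(K+1-j) * E (m+1+j)) + α^(K+2) * E m := by
        simp only [hsub]
        rw [Finset.sum_range_succ' (fun j => α^(K+1-j) * E (m+j)) (K+1), mul_add, Finset.mul_sum]
        congr 1
        · exact Finset.sum_congr rfl c1
        · have e1 : K+1-0 = K+1 := by omega
          have e2 : m+0 = m := by omega
          rw [e1, e2, pow_succ]
          ring
      have hrec' : E (m + (K+2) + 1) + E m = 2 * E (m + (K+2)) := by
        obtain ⟨s, rfl⟩ : ∃ s, m = s + 1 := ⟨m - 1, by omega⟩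
        exact hrec s
      have egoal : m + 1 + (K+2) = m + (K+2) + 1 := by omega
      rw [egoal]
      have hIH : d * ∑ j ∈ Finset.range (K+2), α^(K+2-1-j) * E (m+j) = E (m+(K+2)) := ih.symm
      have hkd2 : d * α^(K+2) = 1 := by linarith [hkeyd]
      have halg : α + d = 2 := by rw [hd]; ring
      linear_combination hrec' - d * hL + d * hR - α * hIH + E m * hkd2 - E (m+(K+2)) * halg
  -- strong induction
  have main : ∀ n, 1 ≤ n → |E n| < 1/2 := by
    intro n
    induction n using Nat.strong_induction_on with
    | _ n ih =>
      intro hn1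
      by_cases hnk : n ≤ K + 2
      · exact hbase n hn1 hnk
      · push_neg at hnk
        obtain ⟨m, rfl⟩ : ∃ m, n = m + (K+2) := ⟨n - (K+2), by omega⟩
        have hm1 : 1 ≤ m := by omega
        rw [hA m hm1, abs_mul, abs_of_pos hd0]
        have habs : |∑ j ∈ Finset.range (K+2), α ^ (K+2-1-j) * E (m+j)|
            ≤ ∑ j ∈ Finset.range (K+2), α ^ (K+2-1-j) * |E (m+j)| := by
          refine (Finset.abs_sum_le_sum_abs _ _).trans ?_
          apply Finset.sum_le_sum
          intro j hj
          rw [abs_mul, abs_of_pos (pow_pos hα0 _)]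
        have hlt : ∑ j ∈ Finset.range (K+2), α ^ (K+2-1-j) * |E (m+j)|
            < ∑ j ∈ Finset.range (K+2), α ^ (K+2-1-j) * (1/2) := by
          apply Finset.sum_lt_sum_of_nonempty ⟨0, Finset.mem_range.2 (by omega)⟩
          intro j hj
          simp only [Finset.mem_range] at hj
          have hEj := ih (m+j) (by omega) (by omega)
          exact mul_lt_mul_of_pos_left hEj (pow_pos hα0 _)
        have hsum2 : ∑ j ∈ Finset.range (K+2), α ^ (K+2-1-j) * (1/2)
            = (1/2) * ∑ i ∈ Finset.range (K+2), α ^ i := by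
          rw [Finset.mul_sum]
          rw [← Finset.sum_range_reflect (fun i => (1/2) * α ^ i) (K+2)]
          apply Finset.sum_congr rfl
          intro j hj; ring
        calc d * |∑ j ∈ Finset.range (K+2), α ^ (K+2-1-j) * E (m+j)|
            < d * ((1/2) * ∑ i ∈ Finset.range (K+2), α ^ i) := by
              apply mul_lt_mul_of_pos_left _ hd0
              calc |∑ j ∈ Finset.range (K+2), α ^ (K+2-1-j) * E (m+j)|
                  ≤ ∑ j ∈ Finset.range (K+2), α ^ (K+2-1-j) * |E (m+j)| := habs
                _ < ∑ j ∈ Finset.range (K+2), α ^ (K+2-1-j) * (1/2) := hlt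
                _ = (1/2) * ∑ i ∈ Finset.range (K+2), α ^ i := hsum2
          _ = (1/2) * (d * ∑ i ∈ Finset.range (K+2), α ^ i) := by ring
          _ = 1/2 := by rw [hsum1]; norm_num
  intro n hn
  exact main n hn
end

section
/- For every n ≥ 2 with n ≠ 6, the integer 2^n - 1 has a prime divisor that does not divide 2^j - 1 for any 1 ≤ j < n. -/
/-!
Let `Φ = Φₙ(2)`. A prime `q ∣ Φ` with `q ∤ n` is a primitive divisor, since `2` has order exactly
`n` modulo `q`. Otherwise every prime factor `p` of `Φ` divides `n`. The order of `2` modulo `p` is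
then the `p`-free part of `n`, which divides `p - 1`; so two prime factors of `Φ` would each be
smaller than the other, and `Φ` is a power of a single odd prime `p`. Lifting the exponent shows
`p² ∤ Φ`, hence `Φ = p`. Writing `n = p m`, `Φₘ(2ᵖ)` is `Φₙ(2) Φₘ(2)` or `Φₙ(2)`, and the estimates
`(2ᵖ - 1)^φ(m) < Φₘ(2ᵖ)`, `Φₘ(2) ≤ 3^φ(m)` force `Φₙ(2) > p` unless `(p, m) = (3, 2)`, i.e. `n = 6`.
-/

open Polynomial Finset

theorem isRoot_cyclotomic_zmod_of_dvd_eval {n p : ℕ} {a : ℤ}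
    (h : (p : ℤ) ∣ (cyclotomic n ℤ).eval a) : IsRoot (cyclotomic n (ZMod p)) (a : ZMod p) := by
  rw [IsRoot.def, ← eq_intCast (Int.castRingHom (ZMod p)), cyclotomic.eval_apply]
  exact (ZMod.intCast_zmod_eq_zero_iff_dvd _ _).mpr h

theorem orderOf_intCast_eq_ordCompl {n p : ℕ} [hp : Fact p.Prime] {a : ℤ} (hn : n ≠ 0)
    (h : (p : ℤ) ∣ (cyclotomic n ℤ).eval a) : orderOf (a : ZMod p) = ordCompl[p] n := by
  have hroot := isRoot_cyclotomic_zmod_of_dvd_eval h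
  rw [← Nat.ordProj_mul_ordCompl_eq_self n p] at hroot
  have : NeZero ((ordCompl[p] n : ℕ) : ZMod p) :=
    NeZero.of_not_dvd _ (Nat.not_dvd_ordCompl hp.out hn)
  exact (isRoot_cyclotomic_prime_pow_mul_iff_of_charP.mp hroot).eq_orderOf.symm

theorem orderOf_intCast_eq_of_not_dvd {n p : ℕ} [Fact p.Prime] {a : ℤ} (hn : n ≠ 0)
    (hpn : ¬p ∣ n) (h : (p : ℤ) ∣ (cyclotomic n ℤ).eval a) : orderOf (a : ZMod p) = n := by
  rw [orderOf_intCast_eq_ordCompl hn h, Nat.factorization_eq_zero_of_not_dvd hpn, pow_zero,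
    Nat.div_one]

theorem ordCompl_dvd_sub_one_of_dvd_cyclotomic_eval {n p : ℕ} [Fact p.Prime] {a : ℤ}
    (hn : n ≠ 0) (h : (p : ℤ) ∣ (cyclotomic n ℤ).eval a) : ordCompl[p] n ∣ p - 1 := by
  have hord := orderOf_intCast_eq_ordCompl hn h
  rw [← hord]
  refine ZMod.orderOf_dvd_card_sub_one fun ha => ?_
  rw [ha, orderOf_zero] at hord
  exact (Nat.ordCompl_pos p hn).ne hord

theorem lt_of_prime_dvd_of_dvd_cyclotomic_eval {n p q : ℕ} {a : ℤ} [hp : Fact p.Prime]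
    (hq : q.Prime) (hn : n ≠ 0) (hne : q ≠ p) (hqn : q ∣ n)
    (hpa : (p : ℤ) ∣ (cyclotomic n ℤ).eval a) : q < p := by
  have hcop : q.Coprime (p ^ n.factorization p) :=
    ((Nat.coprime_primes hq hp.out).mpr hne).pow_right _
  have hq_ordCompl : q ∣ ordCompl[p] n := by
    rw [← Nat.ordProj_mul_ordCompl_eq_self n p] at hqn
    exact hcop.dvd_of_dvd_mul_left hqn
  have := Nat.le_of_dvd (Nat.sub_pos_of_lt hp.out.one_lt)
    (hq_ordCompl.trans (ordCompl_dvd_sub_one_of_dvd_cyclotomic_eval hn hpa))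
  omega

theorem eq_of_prime_dvd_cyclotomic_eval {n p q : ℕ} {a : ℤ} (hp : p.Prime) (hq : q.Prime)
    (hn : n ≠ 0) (hpn : p ∣ n) (hqn : q ∣ n) (hpa : (p : ℤ) ∣ (cyclotomic n ℤ).eval a)
    (hqa : (q : ℤ) ∣ (cyclotomic n ℤ).eval a) : p = q := by
  have := Fact.mk hp
  have := Fact.mk hq
  by_contra hne
  exact (lt_of_prime_dvd_of_dvd_cyclotomic_eval hq hn (Ne.symm hne) hqn hpa).not_gt
    (lt_of_prime_dvd_of_dvd_cyclotomic_eval hp hn hne hpn hqa)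

theorem cyclotomic_mul_dvd_geom_sum {p m : ℕ} (hp : 1 < p) (hm : m ≠ 0) :
    cyclotomic (p * m) ℤ ∣ ∑ i ∈ range p, (X ^ m) ^ i := by
  have hmem : m ∈ (p * m).properDivisors :=
    Nat.mem_properDivisors.mpr ⟨dvd_mul_left m p, by nlinarith [Nat.pos_of_ne_zero hm]⟩
  have h := X_pow_sub_one_mul_cyclotomic_dvd_X_pow_sub_one_of_dvd ℤ hmem
  have hX : (X : ℤ[X]) ^ (p * m) - 1 = (X ^ m - 1) * ∑ i ∈ range p, (X ^ m) ^ i := by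
    rw [mul_comm (X ^ m - 1), geom_sum_mul, ← pow_mul, mul_comm m p]
  rw [hX] at h
  have hne : (X : ℤ[X]) ^ m - 1 ≠ 0 := by
    simpa using X_pow_sub_C_ne_zero (Nat.pos_of_ne_zero hm) (1 : ℤ)
  exact (mul_dvd_mul_iff_left hne).mp h

theorem not_sq_dvd_cyclotomic_eval {n p : ℕ} {a : ℤ} (hp : p.Prime) (hodd : Odd p) (hn : n ≠ 0)
    (hpn : p ∣ n) (h : (p : ℤ) ∣ (cyclotomic n ℤ).eval a) :
    ¬ (p : ℤ) ^ 2 ∣ (cyclotomic n ℤ).eval a := by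
  have := Fact.mk hp
  obtain ⟨m, rfl⟩ := hpn
  have hm : m ≠ 0 := right_ne_zero_of_mul hn
  have hpow : (p : ℤ) ∣ a ^ m - 1 := by
    rw [← ZMod.intCast_zmod_eq_zero_iff_dvd, Int.cast_sub, Int.cast_pow, Int.cast_one, sub_eq_zero,
      ← orderOf_dvd_iff_pow_eq_one, orderOf_intCast_eq_ordCompl hn h]
    simpa using (Nat.ordCompl_self_pow_mul m 1 hp).dvd.trans (Nat.ordCompl_dvd m p)
  have hpow' : ¬ (p : ℤ) ∣ a ^ m := fun hdvd =>
    (Nat.prime_iff_prime_int.mp hp).not_dvd_one (by simpa using dvd_sub hdvd hpow)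
  have hmult := emultiplicity_geom_sum₂_eq_one (y := (1 : ℤ)) (Nat.prime_iff_prime_int.mp hp)
    hodd hpow hpow'
  simp only [one_pow, mul_one] at hmult
  intro hsq
  have hsq' := hsq.trans (eval_dvd (x := a) (cyclotomic_mul_dvd_geom_sum hp.one_lt hm))
  simp only [eval_finsetSum, eval_pow, eval_X] at hsq'
  have := (pow_dvd_iff_le_emultiplicity.mp hsq')
  rw [hmult] at this
  norm_num at this

theorem natAbs_cyclotomic_eval_eq_prime {n p : ℕ} {a : ℤ} (hn : n ≠ 0)
    (hall : ∀ q : ℕ, q.Prime → (q : ℤ) ∣ (cyclotomic n ℤ).eval a → q ∣ n)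
    (hp : p.Prime) (hodd : Odd p) (hpa : (p : ℤ) ∣ (cyclotomic n ℤ).eval a) :
    ((cyclotomic n ℤ).eval a).natAbs = p := by
  set Φ := (cyclotomic n ℤ).eval a
  have hpn := hall p hp hpa
  have hΦ : Φ ≠ 0 := by
    intro hΦ
    obtain ⟨q, hnq, hq⟩ := Nat.exists_infinite_primes (n + 1)
    have := Nat.le_of_dvd (Nat.pos_of_ne_zero hn) (hall q hq (hΦ ▸ dvd_zero _))
    omega
  obtain ⟨e, he⟩ : ∃ e, Φ.natAbs = p ^ e := by
    refine ⟨_, Nat.eq_prime_pow_of_unique_prime_dvd (Int.natAbs_ne_zero.mpr hΦ) fun hq hqΦ => ?_⟩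
    have hqΦ' := Int.natCast_dvd.mpr hqΦ
    exact eq_of_prime_dvd_cyclotomic_eval hq hp hn (hall _ hq hqΦ') hpn hqΦ' hpa
  obtain rfl | rfl | he2 : e = 0 ∨ e = 1 ∨ 2 ≤ e := by omega
  · rw [pow_zero] at he
    exact absurd (he ▸ Int.natCast_dvd.mp hpa) hp.not_dvd_one
  · rw [he, pow_one]
  · refine absurd ?_ (not_sq_dvd_cyclotomic_eval hp hodd hn hpn hpa)
    rw [← Int.dvd_natAbs, he]
    exact_mod_cast pow_dvd_pow p he2

theorem eight_mul_sub_two_le_two_pow {p : ℕ} (hp : 3 ≤ p) : 8 * ((p : ℝ) - 2) ≤ 2 ^ p := by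
  have h : ((p - 3 : ℕ) : ℝ) + 1 ≤ 2 ^ (p - 3) := by exact_mod_cast Nat.lt_two_pow_self
  rw [Nat.cast_sub hp, Nat.cast_ofNat] at h
  have hsplit : (2 : ℝ) ^ p = 2 ^ 3 * 2 ^ (p - 3) := by rw [← pow_add, Nat.add_sub_cancel' hp]
  linarith

theorem mul_three_pow_le_two_pow_sub_one_pow {p k : ℕ} (hp : 3 ≤ p) (hk : k ≠ 0)
    (h : 4 ≤ p ∨ 2 ≤ k) : (p : ℝ) * 3 ^ k ≤ (2 ^ p - 1) ^ k := by
  have hx := eight_mul_sub_two_le_two_pow hp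
  have hp3 : (3 : ℝ) ≤ p := by exact_mod_cast hp
  obtain rfl | ⟨j, rfl⟩ : k = 1 ∨ ∃ j, k = j + 2 := by
    rcases k with _ | _ | j
    exacts [absurd rfl hk, .inl rfl, .inr ⟨j, rfl⟩]
  · have hp4 : (4 : ℝ) ≤ p := by exact_mod_cast h.resolve_right (by norm_num)
    linarith
  · have hsq : 9 * (p : ℝ) ≤ (2 ^ p - 1) ^ 2 := by nlinarith
    have hpow : (3 : ℝ) ^ j ≤ (2 ^ p - 1) ^ j := pow_le_pow_left₀ (by norm_num) (by linarith) j
    calc (p : ℝ) * 3 ^ (j + 2) = 9 * p * 3 ^ j := by ring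
      _ ≤ (2 ^ p - 1) ^ 2 * (2 ^ p - 1) ^ j := by gcongr
      _ = (2 ^ p - 1) ^ (j + 2) := by ring

theorem mul_cyclotomic_eval_two_lt {p m : ℕ} (hp : 3 ≤ p) (hm : m ≠ 0) (h : ¬(p = 3 ∧ m = 2)) :
    (p : ℝ) * (cyclotomic m ℝ).eval 2 < (cyclotomic m ℝ).eval (2 ^ p) := by
  obtain rfl | hm2 : m = 1 ∨ 2 ≤ m := by omega
  · have := eight_mul_sub_two_le_two_pow hp
    have hp3 : (3 : ℝ) ≤ p := by exact_mod_cast hp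
    simp only [cyclotomic_one, eval_sub, eval_X, eval_one]
    linarith
  have hφ : m.totient ≠ 0 := (Nat.totient_pos.mpr (by omega)).ne'
  have hφ2 : 4 ≤ p ∨ 2 ≤ m.totient := by
    obtain rfl | hm3 : m = 2 ∨ 3 ≤ m := by omega
    · omega
    · obtain ⟨c, hc⟩ := Nat.totient_even hm3
      omega
  calc (p : ℝ) * (cyclotomic m ℝ).eval 2 ≤ p * 3 ^ m.totient := by
        gcongr
        have := cyclotomic_eval_le_add_one_pow_totient (q := (2 : ℝ)) one_lt_two m
        norm_num at this
        exact this
    _ ≤ (2 ^ p - 1) ^ m.totient := mul_three_pow_le_two_pow_sub_one_pow hp hφ hφ2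
    _ < (cyclotomic m ℝ).eval (2 ^ p) :=
        sub_one_pow_totient_lt_cyclotomic_eval hm2 (one_lt_pow₀ one_lt_two (by omega))

theorem prime_lt_cyclotomic_eval_two {n p : ℕ} (hp : p.Prime) (hp2 : p ≠ 2) (hn : n ≠ 0)
    (h6 : n ≠ 6) (hpn : p ∣ n) : (p : ℤ) < (cyclotomic n ℤ).eval 2 := by
  have hp3 : 3 ≤ p := by have := hp.two_le; omega
  obtain ⟨m, rfl⟩ := hpn
  have hm : m ≠ 0 := right_ne_zero_of_mul hn
  suffices (p : ℝ) < (cyclotomic (p * m) ℝ).eval 2 by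
    have hcast := cyclotomic.eval_apply (2 : ℤ) (p * m) (Int.castRingHom ℝ)
    rw [eq_intCast, Int.cast_ofNat, eq_intCast] at hcast
    exact_mod_cast hcast ▸ this
  by_cases hpm : p ∣ m
  · have hexp := congrArg (eval 2) (cyclotomic_expand_eq_cyclotomic hp hpm ℝ)
    rw [expand_eval, mul_comm m p] at hexp
    have hm2 : ¬(p = 3 ∧ m = 2) := by
      rintro ⟨rfl, rfl⟩
      norm_num at hpm
    have h1 : 1 ≤ (cyclotomic m ℝ).eval 2 := by
      have := sub_one_pow_totient_le_cyclotomic_eval (q := (2 : ℝ)) one_lt_two m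
      norm_num at this
      exact this
    have := mul_cyclotomic_eval_two_lt hp3 hm hm2
    rw [hexp] at this
    nlinarith
  · have hexp := congrArg (eval 2) (cyclotomic_expand_eq_cyclotomic_mul hp hpm ℝ)
    rw [expand_eval, eval_mul, mul_comm m p] at hexp
    have hm2 : ¬(p = 3 ∧ m = 2) := by
      rintro ⟨rfl, rfl⟩
      exact h6 rfl
    have := mul_cyclotomic_eval_two_lt hp3 hm hm2
    rw [hexp] at this
    exact lt_of_mul_lt_mul_right this (cyclotomic_pos' m one_lt_two).le

theorem dvd_pow_sub_one_iff_orderOf_dvd {p a j : ℕ} (ha : a ≠ 0) :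
    p ∣ a ^ j - 1 ↔ orderOf (a : ZMod p) ∣ j := by
  rw [orderOf_dvd_iff_pow_eq_one, ← Nat.cast_pow, ← Nat.cast_one (R := ZMod p),
    ZMod.natCast_eq_natCast_iff, Nat.ModEq.comm, Nat.modEq_iff_dvd' (Nat.one_le_pow _ _ (Nat.pos_of_ne_zero ha))]

theorem exists_prime_orderOf_two_eq {n : ℕ} (hn : 2 ≤ n) (h6 : n ≠ 6) :
    ∃ p : ℕ, p.Prime ∧ orderOf (2 : ZMod p) = n := by
  set Φ := (cyclotomic n ℤ).eval 2
  have hn0 : n ≠ 0 := by omega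
  by_contra! hnone
  have hdvd_n (q : ℕ) (hq : q.Prime) (hqΦ : (q : ℤ) ∣ Φ) : q ∣ n := by
    by_contra hqn
    have := Fact.mk hq
    exact hnone q hq (by simpa using orderOf_intCast_eq_of_not_dvd hn0 hqn hqΦ)
  have hΦ1 : 1 < Φ.natAbs := by
    simpa using sub_one_lt_natAbs_cyclotomic_eval (q := 2) (by omega) (by norm_num)
  set p := Φ.natAbs.minFac
  have hp : p.Prime := Nat.minFac_prime (by omega)
  have hpΦ : (p : ℤ) ∣ Φ := Int.natCast_dvd.mpr (Nat.minFac_dvd _)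
  have hpn := hdvd_n p hp hpΦ
  have hp2 : p ≠ 2 := by
    intro hp2
    have hΦdvd : Φ ∣ 2 ^ n - 1 := by
      simpa using eval_dvd (x := (2 : ℤ)) (cyclotomic.dvd_X_pow_sub_one n ℤ)
    have h2 : (2 : ℤ) ∣ 2 ^ n - 1 := by simpa [hp2] using hpΦ.trans hΦdvd
    have := dvd_pow_self (2 : ℤ) hn0
    omega
  have hΦp : Φ = p := by
    rw [← Int.natAbs_of_nonneg (show 0 ≤ Φ from (cyclotomic_pos' n one_lt_two).le),
      natAbs_cyclotomic_eval_eq_prime hn0 hdvd_n hp (hp.odd_of_ne_two hp2) hpΦ]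
  exact (prime_lt_cyclotomic_eval_two hp hp2 hn0 h6 hpn).ne' hΦp

theorem stmt_17 (n : ℕ) (hn : 2 ≤ n) (h6 : n ≠ 6) :
    ∃ p : ℕ, p.Prime ∧ p ∣ 2 ^ n - 1 ∧ ∀ j : ℕ, 1 ≤ j → j < n → ¬ p ∣ 2 ^ j - 1 := by
  obtain ⟨p, hp, hord⟩ := exists_prime_orderOf_two_eq hn h6
  have hdvd_iff (j : ℕ) : p ∣ 2 ^ j - 1 ↔ n ∣ j := by
    rw [dvd_pow_sub_one_iff_orderOf_dvd two_ne_zero, Nat.cast_ofNat, hord]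
  refine ⟨p, hp, (hdvd_iff n).mpr dvd_rfl, fun j hj hjn hdvd => ?_⟩
  exact absurd (Nat.le_of_dvd hj ((hdvd_iff j).mp hdvd)) (by omega)
end
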